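/- In the triangle group T_d, for 1 ≤ k ≤ d with k dividing d, the equality ⟪(bac)^d⟫ ∩ ⟨bc⟩ = ⟨(bc)^k⟩ implies H_d = H_k, i.e., the natural surjection H_k → H_d obtained by adding relators is an isomorphism. -/
import Mathlib


def triRels (d : ℕ) : Set (FreeGroup (Fin 3)) :=
  {(FreeGroup.of 0)^2, (FreeGroup.of 1)^2, (FreeGroup.of 2)^2,
   (FreeGroup.of 0 * FreeGroup.of 1)^3, (FreeGroup.of 0 * FreeGroup.of 2)^2,
   (FreeGroup.of 1 * FreeGroup.of 2)^d}

abbrev T (d : ℕ) := PresentedGroup (triRels d)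

def geoRels (d : ℕ) : Set (FreeGroup (Fin 3)) :=
  triRels d ∪ {(FreeGroup.of 1 * FreeGroup.of 0 * FreeGroup.of 2)^d}

abbrev H (d : ℕ) := PresentedGroup (geoRels d)

/-- a relator is 1 in the presented group -/
lemma relone {rels : Set (FreeGroup (Fin 3))} {r : FreeGroup (Fin 3)} (h : r ∈ rels) :
    PresentedGroup.mk rels r = 1 :=
  (QuotientGroup.eq_one_iff r).2 (Subgroup.subset_normalClosure h)

section facts
variable (m : ℕ)

lemma H_a2 : (PresentedGroup.of 0 : H m)^2 = 1 := by
  have := relone (rels := geoRels m) (r := (FreeGroup.of 0)^2) (by simp [geoRels, triRels])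
  rw [map_pow] at this; exact this

lemma H_b2 : (PresentedGroup.of 1 : H m)^2 = 1 := by
  have := relone (rels := geoRels m) (r := (FreeGroup.of 1)^2) (by simp [geoRels, triRels])
  rw [map_pow] at this; exact this

lemma H_c2 : (PresentedGroup.of 2 : H m)^2 = 1 := by
  have := relone (rels := geoRels m) (r := (FreeGroup.of 2)^2) (by simp [geoRels, triRels])
  rw [map_pow] at this; exact this

lemma H_ab3 : ((PresentedGroup.of 0 : H m) * PresentedGroup.of 1)^3 = 1 := by
  have := relone (rels := geoRels m) (r := (FreeGroup.of 0 * FreeGroup.of 1)^3)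
    (by simp [geoRels, triRels])
  rw [map_pow, map_mul] at this; exact this

lemma H_ac2 : ((PresentedGroup.of 0 : H m) * PresentedGroup.of 2)^2 = 1 := by
  have := relone (rels := geoRels m) (r := (FreeGroup.of 0 * FreeGroup.of 2)^2)
    (by simp [geoRels, triRels])
  rw [map_pow, map_mul] at this; exact this

lemma H_bcd : ((PresentedGroup.of 1 : H m) * PresentedGroup.of 2)^m = 1 := by
  have := relone (rels := geoRels m) (r := (FreeGroup.of 1 * FreeGroup.of 2)^m)
    (by simp [geoRels, triRels])
  rw [map_pow, map_mul] at this; exact this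

lemma H_bacd : ((PresentedGroup.of 1 : H m) * PresentedGroup.of 0 * PresentedGroup.of 2)^m = 1 := by
  have := relone (rels := geoRels m) (r := (FreeGroup.of 1 * FreeGroup.of 0 * FreeGroup.of 2)^m)
    (by simp [geoRels])
  rw [map_pow, map_mul, map_mul] at this; exact this

/-- The projection `T m → H m`. -/
noncomputable def piTH : T m →* H m :=
  PresentedGroup.toGroup (f := (PresentedGroup.of : Fin 3 → H m)) (by
    intro r hr
    simp only [triRels, Set.mem_insert_iff, Set.mem_singleton_iff] at hr
    obtain h|h|h|h|h|h := hr <;> subst h <;>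
      simp only [map_pow, map_mul, FreeGroup.lift_apply_of]
    · exact H_a2 m
    · exact H_b2 m
    · exact H_c2 m
    · exact H_ab3 m
    · exact H_ac2 m
    · exact H_bcd m)

@[simp] lemma piTH_of (i : Fin 3) : piTH m (PresentedGroup.of i) = PresentedGroup.of i :=
  PresentedGroup.toGroup.of _

/-- the geodesic endomorphism of `H m`: `a ↦ a`, `b ↦ b`, `c ↦ ac`. -/
noncomputable def geoEnd : H m →* H m :=
  PresentedGroup.toGroup
    (f := (![PresentedGroup.of 0, PresentedGroup.of 1,
        PresentedGroup.of 0 * PresentedGroup.of 2] : Fin 3 → H m)) (by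
    intro r hr
    simp only [geoRels, triRels, Set.union_singleton, Set.mem_insert_iff,
      Set.mem_singleton_iff] at hr
    obtain h|h|h|h|h|h|h := hr <;> subst h <;>
      simp only [map_pow, map_mul, FreeGroup.lift_apply_of, Matrix.cons_val_zero,
        Matrix.cons_val_one, Matrix.head_cons, Matrix.cons_val_two, Matrix.tail_cons]
    · -- (bac)^m ↦ (b a (ac))^m = (bc)^m = 1
      have h1 : (PresentedGroup.of 1 : H m) * PresentedGroup.of 0 *
          (PresentedGroup.of 0 * PresentedGroup.of 2) =
          PresentedGroup.of 1 * PresentedGroup.of 2 := by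
        rw [mul_assoc, ← mul_assoc (PresentedGroup.of 0), ← sq, H_a2, one_mul]
      rw [h1]; exact H_bcd m
    · exact H_a2 m
    · exact H_b2 m
    · exact H_ac2 m
    · exact H_ab3 m
    · -- (ac)^2 ↦ (a(ac))^2 = c^2 = 1
      have h1 : (PresentedGroup.of 0 : H m) * (PresentedGroup.of 0 * PresentedGroup.of 2) =
          PresentedGroup.of 2 := by
        rw [← mul_assoc, ← sq, H_a2, one_mul]
      rw [h1]; exact H_c2 m
    · -- (bc)^m ↦ (b(ac))^m = (bac)^m = 1
      rw [← mul_assoc]; exact H_bacd m)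

end facts

/-- If in `T_d` one has `⟪(bac)^d⟫ ∩ ⟨bc⟩ = ⟨(bc)^k⟩` for some
`1 ≤ k ≤ d` with `k ∣ d`, then `H_d = H_k`: the natural generator-preserving
homomorphism between `H_d` and `H_k` (obtained by adding the relators
`(bc)^k`, `(bac)^k`) is an isomorphism. -/
theorem Hd_eq_Hk_of_inter (d k : ℕ) (hk1 : 1 ≤ k) (hkd : k ≤ d) (hdvd : k ∣ d)
    (hinter :
      Subgroup.normalClosure
          ({(PresentedGroup.of 1 * PresentedGroup.of 0 * PresentedGroup.of 2)^d} :
            Set (T d)) ⊓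
        Subgroup.zpowers (PresentedGroup.of 1 * PresentedGroup.of 2 : T d) =
      Subgroup.zpowers
        ((PresentedGroup.of 1 * PresentedGroup.of 2 : T d)^k)) :
    ∃ φ : H d →* H k,
      (∀ i : Fin 3, φ (PresentedGroup.of i) = PresentedGroup.of i) ∧
      Function.Bijective φ := by
  obtain ⟨m, hm⟩ := hdvd
  -- Key fact 1: (bc)^k = 1 in H d.
  have key1 : ((PresentedGroup.of 1 : H d) * PresentedGroup.of 2)^k = 1 := by
    have hx : ((PresentedGroup.of 1 * PresentedGroup.of 2 : T d))^k ∈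
        Subgroup.normalClosure
          ({(PresentedGroup.of 1 * PresentedGroup.of 0 * PresentedGroup.of 2)^d} :
            Set (T d)) := by
      have : ((PresentedGroup.of 1 * PresentedGroup.of 2 : T d))^k ∈
          Subgroup.zpowers ((PresentedGroup.of 1 * PresentedGroup.of 2 : T d)^k) :=
        Subgroup.mem_zpowers _
      rw [← hinter] at this
      exact this.1
    have hker : Subgroup.normalClosure
        ({(PresentedGroup.of 1 * PresentedGroup.of 0 * PresentedGroup.of 2)^d} :
          Set (T d)) ≤ (piTH d).ker := by
      apply Subgroup.normalClosure_le_normal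
      intro x hx
      rw [Set.mem_singleton_iff] at hx
      subst hx
      rw [SetLike.mem_coe, MonoidHom.mem_ker, map_pow, map_mul, map_mul,
        piTH_of, piTH_of, piTH_of]
      exact H_bacd d
    have := hker hx
    rw [MonoidHom.mem_ker, map_pow, map_mul, piTH_of, piTH_of] at this
    exact this
  -- Key fact 2: (bac)^k = 1 in H d, via the geodesic endomorphism.
  have key2 : ((PresentedGroup.of 1 : H d) * PresentedGroup.of 0 * PresentedGroup.of 2)^k = 1 := by
    have := congrArg (geoEnd d) key1
    rw [map_one, map_pow, map_mul] at this
    simp only [geoEnd, PresentedGroup.toGroup.of, Matrix.cons_val_one, Matrix.head_cons,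
      Matrix.cons_val_two, Matrix.tail_cons] at this
    rw [← mul_assoc] at this
    exact this
  -- The map φ : H d →* H k.
  have hφrel : ∀ r ∈ geoRels d,
      FreeGroup.lift (PresentedGroup.of : Fin 3 → H k) r = 1 := by
    intro r hr
    simp only [geoRels, triRels, Set.union_singleton, Set.mem_insert_iff,
      Set.mem_singleton_iff] at hr
    obtain h|h|h|h|h|h|h := hr <;> subst h <;>
      simp only [map_pow, map_mul, FreeGroup.lift_apply_of]
    · rw [hm, pow_mul, H_bacd k, one_pow]
    · exact H_a2 k
    · exact H_b2 k
    · exact H_c2 k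
    · exact H_ab3 k
    · exact H_ac2 k
    · rw [hm, pow_mul, H_bcd k, one_pow]
  -- The map ψ : H k →* H d.
  have hψrel : ∀ r ∈ geoRels k,
      FreeGroup.lift (PresentedGroup.of : Fin 3 → H d) r = 1 := by
    intro r hr
    simp only [geoRels, triRels, Set.union_singleton, Set.mem_insert_iff,
      Set.mem_singleton_iff] at hr
    obtain h|h|h|h|h|h|h := hr <;> subst h <;>
      simp only [map_pow, map_mul, FreeGroup.lift_apply_of]
    · exact key2
    · exact H_a2 d
    · exact H_b2 d
    · exact H_c2 d
    · exact H_ab3 d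
    · exact H_ac2 d
    · exact key1
  refine ⟨PresentedGroup.toGroup hφrel, fun i => PresentedGroup.toGroup.of hφrel, ?_⟩
  have hcomp1 : (PresentedGroup.toGroup hψrel).comp (PresentedGroup.toGroup hφrel) =
      MonoidHom.id (H d) := by
    ext i
    simp [PresentedGroup.toGroup.of]
  have hcomp2 : (PresentedGroup.toGroup hφrel).comp (PresentedGroup.toGroup hψrel) =
      MonoidHom.id (H k) := by
    ext i
    simp [PresentedGroup.toGroup.of]
  have h1 : ∀ x, PresentedGroup.toGroup hψrel (PresentedGroup.toGroup hφrel x) = x := by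
    intro x
    rw [← MonoidHom.comp_apply, hcomp1, MonoidHom.id_apply]
  have h2 : ∀ x, PresentedGroup.toGroup hφrel (PresentedGroup.toGroup hψrel x) = x := by
    intro x
    rw [← MonoidHom.comp_apply, hcomp2, MonoidHom.id_apply]
  exact ⟨Function.LeftInverse.injective h1, Function.RightInverse.surjective h2⟩
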